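/- Let Σ be a compact Hausdorff topological group with Haar probability measure μ_Σ acting measurably on a measurable space X, let f : [0,∞) → ℝ be convex and lower semicontinuous with f(1) = 0 and f strictly convex at 1, and let Γ ⊂ M_b(X) satisfy S_Σ[Γ] ⊂ Γ. Then for arbitrary (not necessarily Σ-invariant) probability measures Q and P on X, the (f,Γ)-divergence satisfies D_f^{Γ_Σ^{inv}}(Q‖P) = D_f^Γ(S^Σ[Q] ‖ S^Σ[P]). -/

import Mathlib

open MeasureTheory
open scoped ENNReal

/-- `Mb X`: the set of bounded measurable real-valued functions on `X`. -/
def Mb (X : Type*) [MeasurableSpace X] : Set (X → ℝ) :=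
  {γ | Measurable γ ∧ ∃ C : ℝ, ∀ x, |γ x| ≤ C}

/-- The symmetrization operator `S_Σ[γ](x) = ∫_Σ γ(T_σ(x)) dμ_Σ(σ)`. -/
noncomputable def SSigma {X G : Type*} [MeasurableSpace X] [MeasurableSpace G]
    (μ : Measure G) (T : G → X → X) (γ : X → ℝ) : X → ℝ :=
  fun x => ∫ σ, γ (T σ x) ∂μ

/-- The dual symmetrization operator `S^Σ` on measures, `S^Σ[P] = (μ × P) ∘ T^{-1}`;
it satisfies `∫ γ d(S^Σ[P]) = ∫ S_Σ[γ] dP` for all bounded measurable `γ`. -/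
noncomputable def SdualSigma {X G : Type*} [MeasurableSpace X] [MeasurableSpace G]
    (μ : Measure G) (T : G → X → X) (P : Measure X) : Measure X :=
  Measure.map (fun p : G × X => T p.1 p.2) (μ.prod P)

/-- The Legendre transform `f*(y) = sup_{x ≥ 0} {yx − f(x)}` of `f : [0,∞) → ℝ`,
valued in the extended reals. -/
noncomputable def legendre (f : ℝ → ℝ) (y : ℝ) : EReal :=
  ⨆ x ∈ Set.Ici (0 : ℝ), ((y * x - f x : ℝ) : EReal)

/-- Positive part of an extended real, as an extended nonnegative real. -/
noncomputable def erealToENNReal : EReal → ℝ≥0∞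
  | ⊥ => 0
  | ⊤ => ⊤
  | (x : ℝ) => ENNReal.ofReal x

/-- Integral of an extended-real-valued function: difference of the lower integrals of
the positive and negative parts. -/
noncomputable def eIntegral {X : Type*} [MeasurableSpace X] (P : Measure X)
    (g : X → EReal) : EReal :=
  ((∫⁻ x, erealToENNReal (g x) ∂P : ℝ≥0∞) : EReal)
    - ((∫⁻ x, erealToENNReal (-(g x)) ∂P : ℝ≥0∞) : EReal)

/-- `Λ_f^P[γ] = inf_{ν ∈ ℝ} {ν + E_P[f*(γ − ν)]}`. -/
noncomputable def LambdaF {X : Type*} [MeasurableSpace X] (f : ℝ → ℝ) (P : Measure X)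
    (γ : X → ℝ) : EReal :=
  ⨅ ν : ℝ, ((ν : EReal) + eIntegral P fun x => legendre f (γ x - ν))

/-- The `(f,Γ)`-divergence `D_f^Γ(Q‖P) = sup_{γ ∈ Γ} {E_Q[γ] − Λ_f^P[γ]}`. -/
noncomputable def DfGamma {X : Type*} [MeasurableSpace X] (f : ℝ → ℝ)
    (Γ : Set (X → ℝ)) (Q P : Measure X) : EReal :=
  ⨆ γ ∈ Γ, (((∫ x, γ x ∂Q : ℝ) : EReal) - LambdaF f P γ)

/-! ### Auxiliary lemmas -/

section EE

lemma eE_coe (x : ℝ) : erealToENNReal (x : EReal) = ENNReal.ofReal x := rfl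

lemma eE_mono : Monotone erealToENNReal := by
  intro a b h
  induction a using EReal.rec with
  | bot => exact (zero_le : (0 : ℝ≥0∞) ≤ _)
  | top => rw [top_le_iff.1 h]
  | coe x =>
    induction b using EReal.rec with
    | bot => exact absurd h (by simp)
    | top => exact le_top
    | coe y => exact ENNReal.ofReal_le_ofReal (by exact_mod_cast h)

lemma eE_measurable : Measurable erealToENNReal := eE_mono.measurable

lemma ofReal_le_eE {a : ℝ} {b : EReal} (h : (a : EReal) ≤ b) :
    ENNReal.ofReal a ≤ erealToENNReal b := by
  rw [← eE_coe]; exact eE_mono h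

lemma eE_add_shift {a : EReal} {K : ℝ} (hK : 0 ≤ K) (ha : -(K : EReal) ≤ a) :
    erealToENNReal (a + K) + erealToENNReal (-a)
      = erealToENNReal a + ENNReal.ofReal K := by
  induction a using EReal.rec with
  | bot => exact absurd ha (by simp [← EReal.coe_neg])
  | top =>
    rw [EReal.top_add_coe, EReal.neg_top]
    exact (by simp : (⊤ : ℝ≥0∞) + 0 = ⊤ + ENNReal.ofReal K)
  | coe r =>
    have hr : -K ≤ r := by exact_mod_cast (by simpa [← EReal.coe_neg] using ha)
    rw [← EReal.coe_add, ← EReal.coe_neg, eE_coe, eE_coe, eE_coe]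
    rcases le_total 0 r with h0 | h0
    · rw [ENNReal.ofReal_add h0 hK, ENNReal.ofReal_of_nonpos (neg_nonpos.2 h0)]
      ring
    · rw [ENNReal.ofReal_of_nonpos h0, ← ENNReal.ofReal_add (by linarith) (by linarith)]
      ring_nf

lemma eIntegral_shift {X : Type*} [MeasurableSpace X] (P : Measure X)
    [IsProbabilityMeasure P] (g : X → EReal) {K : ℝ} (hK : 0 ≤ K)
    (hg : ∀ x, -(K : EReal) ≤ g x)
    (hm2 : Measurable fun x => erealToENNReal (-(g x))) :
    eIntegral P g
      = ((∫⁻ x, erealToENNReal (g x + (K : EReal)) ∂P : ℝ≥0∞) : EReal) - (K : EReal) := by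
  set A := ∫⁻ x, erealToENNReal (g x) ∂P with hA
  set N := ∫⁻ x, erealToENNReal (-(g x)) ∂P with hN
  set S := ∫⁻ x, erealToENNReal (g x + (K : EReal)) ∂P with hS
  have hNle : N ≤ ENNReal.ofReal K := by
    calc N ≤ ∫⁻ _, ENNReal.ofReal K ∂P := by
            refine lintegral_mono fun x => ?_
            rw [← eE_coe]
            refine eE_mono ?_
            rw [EReal.neg_le, ← EReal.coe_neg]
            exact hg x
      _ = ENNReal.ofReal K := by simp
  have hNfin : N ≠ ⊤ := (lt_of_le_of_lt hNle (by simp [ENNReal.ofReal_lt_top])).ne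
  have key : S + N = A + ENNReal.ofReal K := by
    calc S + N = ∫⁻ x, (erealToENNReal (g x + (K : EReal)) + erealToENNReal (-(g x))) ∂P :=
          (lintegral_add_right _ hm2).symm
      _ = ∫⁻ x, (erealToENNReal (g x) + ENNReal.ofReal K) ∂P :=
          lintegral_congr fun x => eE_add_shift hK (hg x)
      _ = A + ENNReal.ofReal K := by
          rw [lintegral_add_right _ measurable_const, lintegral_const]
          simp [hA]
  have hcoe : ∀ x : ℝ≥0∞, x ≠ ⊤ → (x : EReal) = ((x.toReal : ℝ) : EReal) := by
    intro x hx
    rw [← EReal.toReal_coe_ennreal]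
    refine (EReal.coe_toReal (by simpa [EReal.coe_ennreal_eq_top_iff]) ?_).symm
    exact (lt_of_lt_of_le (by simp : (⊥ : EReal) < 0) (EReal.coe_ennreal_nonneg x)).ne'
  rw [eIntegral, ← hA, ← hN]
  by_cases hAtop : A = ⊤
  · have hStop : S = ⊤ := by
      by_contra hS'
      have : S + N ≠ ⊤ := ENNReal.add_ne_top.2 ⟨hS', hNfin⟩
      rw [key, hAtop] at this
      simp at this
    rw [hAtop, hStop, EReal.coe_ennreal_top, hcoe N hNfin, EReal.top_sub_coe,
      EReal.top_sub_coe]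
  · have hStop : S ≠ ⊤ := by
      intro hS'
      have htop : A + ENNReal.ofReal K = ⊤ := by rw [← key, hS']; simp
      rcases ENNReal.add_eq_top.1 htop with h | h
      · exact hAtop h
      · exact ENNReal.ofReal_ne_top h
    have hreal : S.toReal + N.toReal = A.toReal + K := by
      have := congrArg ENNReal.toReal key
      rwa [ENNReal.toReal_add hStop hNfin, ENNReal.toReal_add hAtop ENNReal.ofReal_ne_top,
        ENNReal.toReal_ofReal hK] at this
    rw [hcoe N hNfin, hcoe A hAtop, hcoe S hStop, ← EReal.coe_sub, ← EReal.coe_sub,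
      EReal.coe_eq_coe_iff]
    linarith

end EE

section Legendre

lemma legendre_mono (f : ℝ → ℝ) : Monotone (legendre f) := by
  intro a b h
  refine iSup₂_mono fun t ht => ?_
  exact_mod_cast sub_le_sub_right (mul_le_mul_of_nonneg_right h ht) _

lemma le_legendre (f : ℝ → ℝ) (hf1 : f 1 = 0) (y : ℝ) : (y : EReal) ≤ legendre f y := by
  refine le_iSup₂_of_le 1 (by norm_num) ?_
  simp [hf1]

lemma legendre_measurable (f : ℝ → ℝ) : Measurable (legendre f) :=
  (legendre_mono f).measurable

lemma addK_mono (K : ℝ) : Monotone fun a : EReal => a + (K : EReal) :=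
  fun _ _ h => add_le_add_left h _

lemma negE_anti : Antitone fun a : EReal => -a := fun _ _ h => EReal.neg_le_neg_iff.2 h

end Legendre

section MeasureLemmas

variable {X G : Type*} [MeasurableSpace X] [MeasurableSpace G]

lemma lintegral_SdualSigma_inv (μ : Measure G) [IsProbabilityMeasure μ] {T : G → X → X}
    (hT : Measurable fun p : G × X => T p.1 p.2) (P : Measure X) [IsProbabilityMeasure P]
    {g : X → ℝ≥0∞} (hg : Measurable g) (hinv : ∀ σ x, g (T σ x) = g x) :
    ∫⁻ x, g x ∂(SdualSigma μ T P) = ∫⁻ x, g x ∂P := by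
  rw [SdualSigma, lintegral_map hg hT]
  simp_rw [hinv]
  rw [← lintegral_map hg measurable_snd, Measure.map_snd_prod]
  simp

lemma integral_SdualSigma_inv (μ : Measure G) [IsProbabilityMeasure μ] {T : G → X → X}
    (hT : Measurable fun p : G × X => T p.1 p.2) (P : Measure X) [IsProbabilityMeasure P]
    {γ : X → ℝ} (hγ : Measurable γ) (hinv : ∀ σ x, γ (T σ x) = γ x) :
    ∫ x, γ x ∂(SdualSigma μ T P) = ∫ x, γ x ∂P := by
  rw [SdualSigma, integral_map hT.aemeasurable hγ.stronglyMeasurable.aestronglyMeasurable]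
  simp_rw [hinv]
  rw [← integral_map (f := γ) measurable_snd.aemeasurable
    hγ.stronglyMeasurable.aestronglyMeasurable, Measure.map_snd_prod]
  simp

lemma integral_SdualSigma_eq (μ : Measure G) [IsProbabilityMeasure μ] {T : G → X → X}
    (hT : Measurable fun p : G × X => T p.1 p.2) (Q : Measure X) [IsProbabilityMeasure Q]
    {γ : X → ℝ} (hγ : Measurable γ) {C : ℝ} (hC : ∀ x, |γ x| ≤ C) :
    ∫ x, γ x ∂(SdualSigma μ T Q) = ∫ x, SSigma μ T γ x ∂Q := by
  have hmeas : Measurable fun p : G × X => γ (T p.1 p.2) := hγ.comp hT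
  have hint : Integrable (fun p : G × X => γ (T p.1 p.2)) (μ.prod Q) :=
    ⟨hmeas.stronglyMeasurable.aestronglyMeasurable,
     HasFiniteIntegral.of_bounded (C := C)
       (ae_of_all _ fun p => by simpa [Real.norm_eq_abs] using hC _)⟩
  rw [SdualSigma, integral_map hT.aemeasurable hγ.stronglyMeasurable.aestronglyMeasurable,
    integral_prod_symm _ hint]
  rfl

lemma SSigma_measurable (μ : Measure G) [IsProbabilityMeasure μ] {T : G → X → X}
    (hT : Measurable fun p : G × X => T p.1 p.2) {γ : X → ℝ} (hγ : Measurable γ) :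
    Measurable (SSigma μ T γ) := by
  have h : StronglyMeasurable fun q : X × G => γ (T q.2 q.1) :=
    (hγ.comp (hT.comp measurable_swap)).stronglyMeasurable
  exact h.integral_prod_right'.measurable

lemma SSigma_bound (μ : Measure G) [IsProbabilityMeasure μ] (T : G → X → X)
    {γ : X → ℝ} {C : ℝ} (hC : ∀ x, |γ x| ≤ C) : ∀ x, |SSigma μ T γ x| ≤ C := by
  intro x
  have := norm_integral_le_of_norm_le_const (μ := μ) (C := C)
    (f := fun σ => γ (T σ x)) (ae_of_all _ fun σ => by simpa [Real.norm_eq_abs] using hC (T σ x))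
  simpa [SSigma, Real.norm_eq_abs, measure_univ] using this

lemma SSigma_inv
    {G : Type*} [Group G] [TopologicalSpace G] [IsTopologicalGroup G]
    [MeasurableSpace G] [BorelSpace G]
    (μ : Measure G) [IsProbabilityMeasure μ]
    (hμr : ∀ σ : G, Measure.map (fun τ => τ * σ) μ = μ)
    {T : G → X → X} (hT : Measurable fun p : G × X => T p.1 p.2)
    (hTmul : ∀ σ₁ σ₂ : G, T σ₁ ∘ T σ₂ = T (σ₁ * σ₂))
    {γ : X → ℝ} (hγ : Measurable γ) :
    ∀ σ x, SSigma μ T γ (T σ x) = SSigma μ T γ x := by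
  intro τ x
  have hmeas : ∀ y : X, Measurable fun σ => γ (T σ y) := fun y =>
    hγ.comp (hT.comp (measurable_id.prodMk measurable_const))
  calc SSigma μ T γ (T τ x) = ∫ σ, γ (T (σ * τ) x) ∂μ := by
        refine integral_congr_ae (ae_of_all _ fun σ => ?_)
        show γ (T σ (T τ x)) = γ (T (σ * τ) x)
        rw [← hTmul σ τ]
        rfl
    _ = ∫ σ, γ (T σ x) ∂(Measure.map (fun τ' => τ' * τ) μ) :=
        (integral_map (measurable_mul_const τ).aemeasurable
          (hmeas x).stronglyMeasurable.aestronglyMeasurable).symm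
    _ = SSigma μ T γ x := by rw [hμr τ]; rfl

lemma jensen_key
    (μ : Measure G) [IsProbabilityMeasure μ]
    {T : G → X → X} (hT : Measurable fun p : G × X => T p.1 p.2)
    (P : Measure X) [IsProbabilityMeasure P]
    (f : ℝ → ℝ) (hf1 : f 1 = 0)
    {γ : X → ℝ} (hγ : Measurable γ) {C : ℝ} (hC : ∀ x, |γ x| ≤ C)
    (ν K : ℝ) (hK : C + |ν| ≤ K) :
    ∫⁻ x, erealToENNReal (legendre f (SSigma μ T γ x - ν) + (K : EReal)) ∂P
      ≤ ∫⁻ x, erealToENNReal (legendre f (γ x - ν) + (K : EReal)) ∂(SdualSigma μ T P) := by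
  have hm1 : Measurable fun x => erealToENNReal (legendre f (γ x - ν) + (K : EReal)) :=
    (eE_measurable.comp ((addK_mono K).measurable.comp (legendre_measurable f))).comp
      (hγ.sub measurable_const)
  have hm2 : Measurable fun p : G × X =>
      erealToENNReal (legendre f (γ (T p.1 p.2) - ν) + (K : EReal)) := hm1.comp hT
  have claim : ∀ x, erealToENNReal (legendre f (SSigma μ T γ x - ν) + (K : EReal))
      ≤ ∫⁻ σ, erealToENNReal (legendre f (γ (T σ x) - ν) + (K : EReal)) ∂μ := by
    intro x
    set y₀ : ℝ := SSigma μ T γ x - ν with hy₀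
    have hC0 : 0 ≤ C := le_trans (abs_nonneg _) (hC x)
    have hK0 : 0 ≤ K := le_trans (by positivity) hK
    have hex : ∀ M : ℝ, (M : EReal) < legendre f y₀ →
        ∃ t ∈ Set.Ici (0 : ℝ), M < y₀ * t - f t := by
      intro M hM
      rw [legendre, lt_iSup_iff] at hM
      obtain ⟨t, ht'⟩ := hM
      rw [lt_iSup_iff] at ht'
      obtain ⟨ht, h2⟩ := ht'
      exact ⟨t, ht, by exact_mod_cast h2⟩
    have hne : legendre f y₀ ≠ ⊥ := fun h => by
      simpa [h] using le_legendre f hf1 y₀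
    have step1 : erealToENNReal (legendre f y₀ + (K : EReal))
        ≤ ⨆ t ∈ Set.Ici (0 : ℝ), ENNReal.ofReal (y₀ * t - f t + K) := by
      by_cases htop : legendre f y₀ = ⊤
      · rw [htop, EReal.top_add_coe]
        refine ENNReal.le_of_forall_nnreal_lt fun r _ => ?_
        obtain ⟨t, ht, hgt⟩ := hex ((r : ℝ) - K)
          (by rw [htop]; exact EReal.coe_lt_top _)
        refine le_iSup₂_of_le t ht ?_
        rw [← ENNReal.ofReal_coe_nnreal]
        exact ENNReal.ofReal_le_ofReal (by linarith)
      · have hl : legendre f y₀ = (((legendre f y₀).toReal : ℝ) : EReal) :=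
          (EReal.coe_toReal htop hne).symm
        set l : ℝ := (legendre f y₀).toReal with hldef
        rw [hl, ← EReal.coe_add, eE_coe]
        refine ENNReal.le_of_forall_nnreal_lt fun r hr => ?_
        rw [← ENNReal.ofReal_coe_nnreal] at hr
        have hrlt : (r : ℝ) < l + K :=
          lt_of_not_ge fun hle => not_lt.2 (ENNReal.ofReal_le_ofReal hle) hr
        obtain ⟨t, ht, hgt⟩ := hex ((r : ℝ) - K)
          (by rw [hl]; exact_mod_cast (by linarith : (r : ℝ) - K < l))
        refine le_iSup₂_of_le t ht ?_
        rw [← ENNReal.ofReal_coe_nnreal]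
        exact ENNReal.ofReal_le_ofReal (by linarith)
    have step2 : ∀ t ∈ Set.Ici (0 : ℝ), ENNReal.ofReal (y₀ * t - f t + K)
        ≤ ∫⁻ σ, erealToENNReal (legendre f (γ (T σ x) - ν) + (K : EReal)) ∂μ := by
      intro t ht
      have hmeasσ : Measurable fun σ => γ (T σ x) :=
        hγ.comp (hT.comp (measurable_id.prodMk measurable_const))
      set h : G → ℝ := fun σ => (γ (T σ x) - ν) * t - f t + K with hh
      have hmeash : Measurable h :=
        (((hmeasσ.sub measurable_const).mul measurable_const).sub
          measurable_const).add measurable_const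
      have hbound : ∀ σ, ‖h σ‖ ≤ (C + |ν|) * t + (K + |f t|) := by
        intro σ
        have h1 : |γ (T σ x) - ν| ≤ C + |ν| :=
          le_trans (abs_sub _ _) (add_le_add_left (hC _) _)
        have h2 : |(γ (T σ x) - ν) * t| ≤ (C + |ν|) * t := by
          rw [abs_mul, abs_of_nonneg (show (0 : ℝ) ≤ t from ht)]
          exact mul_le_mul_of_nonneg_right h1 ht
        have h3 : |K - f t| ≤ K + |f t| :=
          le_trans (abs_sub _ _) (by rw [abs_of_nonneg hK0])
        calc ‖h σ‖ = |(γ (T σ x) - ν) * t + (K - f t)| := by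
              rw [hh, Real.norm_eq_abs]
              ring_nf
          _ ≤ |(γ (T σ x) - ν) * t| + |K - f t| := abs_add_le _ _
          _ ≤ (C + |ν|) * t + (K + |f t|) := add_le_add h2 h3
      have hint : Integrable h μ :=
        ⟨hmeash.stronglyMeasurable.aestronglyMeasurable,
         HasFiniteIntegral.of_bounded (C := (C + |ν|) * t + (K + |f t|))
           (ae_of_all _ hbound)⟩
      have hintγ : Integrable (fun σ => γ (T σ x)) μ :=
        ⟨hmeasσ.stronglyMeasurable.aestronglyMeasurable,
         HasFiniteIntegral.of_bounded (C := C)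
           (ae_of_all _ fun σ => by simpa [Real.norm_eq_abs] using hC _)⟩
      have hI : ∫ σ, h σ ∂μ = y₀ * t - f t + K := by
        have e1 : h = fun σ => t * γ (T σ x) + (-ν * t - f t + K) :=
          funext fun σ => by rw [hh]; ring
        rw [e1, integral_add (hintγ.const_mul t) (integrable_const _),
          integral_const_mul, integral_const]
        have : y₀ = (∫ σ, γ (T σ x) ∂μ) - ν := hy₀
        simp only [measure_univ, probReal_univ, ENNReal.toReal_one, smul_eq_mul, one_mul, mul_one]
        rw [this]; ring
      have hmax : Integrable (fun σ => max (h σ) 0) μ := hint.pos_part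
      calc ENNReal.ofReal (y₀ * t - f t + K)
          = ENNReal.ofReal (∫ σ, h σ ∂μ) := by rw [hI]
        _ ≤ ENNReal.ofReal (∫ σ, max (h σ) 0 ∂μ) :=
            ENNReal.ofReal_le_ofReal
              (integral_mono hint hmax fun σ => le_max_left _ _)
        _ = ∫⁻ σ, ENNReal.ofReal (max (h σ) 0) ∂μ :=
            ofReal_integral_eq_lintegral_ofReal hmax
              (ae_of_all _ fun σ => le_max_right _ _)
        _ ≤ ∫⁻ σ, erealToENNReal (legendre f (γ (T σ x) - ν) + (K : EReal)) ∂μ := by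
            refine lintegral_mono fun σ => ?_
            rcases le_total (h σ) 0 with h0 | h0
            · rw [max_eq_right h0]
              simp
            · rw [max_eq_left h0]
              refine ofReal_le_eE ?_
              have hle : ((γ (T σ x) - ν) * t - f t : EReal)
                  ≤ legendre f (γ (T σ x) - ν) :=
                le_iSup₂_of_le t ht le_rfl
              calc ((h σ : ℝ) : EReal)
                  = (((γ (T σ x) - ν) * t - f t : ℝ) : EReal) + (K : EReal) := by
                    rw [hh, ← EReal.coe_add]
                _ ≤ legendre f (γ (T σ x) - ν) + (K : EReal) :=
                    add_le_add_left hle _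
    exact le_trans step1 (iSup₂_le step2)
  calc ∫⁻ x, erealToENNReal (legendre f (SSigma μ T γ x - ν) + (K : EReal)) ∂P
      ≤ ∫⁻ x, ∫⁻ σ, erealToENNReal (legendre f (γ (T σ x) - ν) + (K : EReal)) ∂μ ∂P :=
        lintegral_mono claim
    _ = ∫⁻ p : G × X, erealToENNReal (legendre f (γ (T p.1 p.2) - ν) + (K : EReal))
          ∂(μ.prod P) := (lintegral_prod_symm' _ hm2).symm
    _ = ∫⁻ x, erealToENNReal (legendre f (γ x - ν) + (K : EReal)) ∂(SdualSigma μ T P) :=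
        (lintegral_map hm1 hT).symm

end MeasureLemmas

/-- Theorem 3.4 for `(f,Γ)`-divergences: if `S_Σ[Γ] ⊆ Γ`, then for
arbitrary (not necessarily `Σ`-invariant) probability measures `Q, P`,
`D_f^{Γ_Σ^{inv}}(Q‖P) = D_f^Γ(S^Σ[Q]‖S^Σ[P])`. -/
theorem fGamma_divergence_symmetrized_measures
    {X : Type*} [MeasurableSpace X]
    {G : Type*} [Group G] [TopologicalSpace G] [IsTopologicalGroup G]
    [CompactSpace G] [T2Space G] [MeasurableSpace G] [BorelSpace G]
    (μ : Measure G) [IsProbabilityMeasure μ]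
    (hμl : ∀ σ : G, Measure.map (fun τ => σ * τ) μ = μ)
    (hμr : ∀ σ : G, Measure.map (fun τ => τ * σ) μ = μ)
    (T : G → X → X)
    (hT : Measurable fun p : G × X => T p.1 p.2)
    (hT1 : T 1 = id)
    (hTmul : ∀ σ₁ σ₂ : G, T σ₁ ∘ T σ₂ = T (σ₁ * σ₂))
    -- `f : [0,∞) → ℝ` convex, lower semicontinuous, `f(1) = 0`, strictly convex at `1`
    (f : ℝ → ℝ)
    (hfconv : ConvexOn ℝ (Set.Ici (0 : ℝ)) f)
    (hflsc : LowerSemicontinuousOn f (Set.Ici (0 : ℝ)))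
    (hf1 : f 1 = 0)
    (hfstrict : ∀ x ∈ Set.Ici (0 : ℝ), ∀ y ∈ Set.Ici (0 : ℝ), ∀ t : ℝ,
      0 < t → t < 1 → x ≠ y → t * x + (1 - t) * y = 1 →
      f 1 < t * f x + (1 - t) * f y)
    (Γ : Set (X → ℝ)) (hΓb : Γ ⊆ Mb X)
    (hSΓ : SSigma μ T '' Γ ⊆ Γ)
    (Q P : Measure X) [IsProbabilityMeasure Q] [IsProbabilityMeasure P] :
    DfGamma f {γ ∈ Γ | ∀ σ : G, γ ∘ T σ = γ} Q P
      = DfGamma f Γ (SdualSigma μ T Q) (SdualSigma μ T P) := by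
  haveI hSP : IsProbabilityMeasure (SdualSigma μ T P) := by
    unfold SdualSigma
    exact Measure.isProbabilityMeasure_map hT.aemeasurable
  haveI hSQ : IsProbabilityMeasure (SdualSigma μ T Q) := by
    unfold SdualSigma
    exact Measure.isProbabilityMeasure_map hT.aemeasurable
  have Hpos : ∀ (γ : X → ℝ), Measurable γ → ∀ ν : ℝ,
      Measurable fun x => erealToENNReal (legendre f (γ x - ν)) := fun γ hγ ν =>
    (eE_measurable.comp (legendre_measurable f)).comp (hγ.sub measurable_const)
  have Hneg : ∀ (γ : X → ℝ), Measurable γ → ∀ ν : ℝ,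
      Measurable fun x => erealToENNReal (-(legendre f (γ x - ν))) := fun γ hγ ν =>
    ((eE_measurable.comp negE_anti.measurable).comp (legendre_measurable f)).comp
      (hγ.sub measurable_const)
  refine le_antisymm ?_ ?_
  · -- invariant `γ` contributes the same value on both sides
    refine iSup₂_le fun γ hγ => ?_
    obtain ⟨hγΓ, hγinv⟩ := hγ
    obtain ⟨hγm, C, hγC⟩ := hΓb hγΓ
    have hinvpt : ∀ σ x, γ (T σ x) = γ x := fun σ x => congrFun (hγinv σ) x
    have hEQ : ∫ x, γ x ∂(SdualSigma μ T Q) = ∫ x, γ x ∂Q :=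
      integral_SdualSigma_inv μ hT Q hγm hinvpt
    have hΛ : LambdaF f (SdualSigma μ T P) γ = LambdaF f P γ := by
      refine iInf_congr fun ν => ?_
      congr 1
      rw [eIntegral, eIntegral,
        lintegral_SdualSigma_inv μ hT P (Hpos γ hγm ν)
          (fun σ x => by simp only [hinvpt σ x]),
        lintegral_SdualSigma_inv μ hT P (Hneg γ hγm ν)
          (fun σ x => by simp only [hinvpt σ x])]
    refine le_iSup₂_of_le γ hγΓ (le_of_eq ?_)
    rw [hEQ, hΛ]
  · -- arbitrary `γ ∈ Γ` is dominated by the invariant function `SSigma μ T γ`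
    refine iSup₂_le fun γ hγΓ => ?_
    obtain ⟨hγm, C, hγC⟩ := hΓb hγΓ
    have hγC0 : ∀ x, |γ x| ≤ max C 0 := fun x => le_trans (hγC x) (le_max_left _ _)
    set C0 : ℝ := max C 0 with hC0def
    have hSm : Measurable (SSigma μ T γ) := SSigma_measurable μ hT hγm
    have hSb : ∀ x, |SSigma μ T γ x| ≤ C0 := SSigma_bound μ T hγC0
    have hSinv := SSigma_inv μ hμr hT hTmul hγm
    have hSγΓ : SSigma μ T γ ∈ Γ := hSΓ ⟨γ, hγΓ, rfl⟩
    have hEQ : ∫ x, γ x ∂(SdualSigma μ T Q) = ∫ x, SSigma μ T γ x ∂Q :=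
      integral_SdualSigma_eq μ hT Q hγm hγC
    have hΛ : LambdaF f P (SSigma μ T γ) ≤ LambdaF f (SdualSigma μ T P) γ := by
      refine iInf_mono fun ν => ?_
      refine add_le_add_right ?_ _
      set K : ℝ := C0 + |ν| with hKdef
      have hK0 : (0 : ℝ) ≤ K := by positivity
      have lb : ∀ (δ : X → ℝ), (∀ x, |δ x| ≤ C0) → ∀ x : X,
          -(K : EReal) ≤ legendre f (δ x - ν) := by
        intro δ hδ x
        refine le_trans ?_ (le_legendre f hf1 (δ x - ν))
        rw [← EReal.coe_neg, EReal.coe_le_coe_iff]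
        have h1 := abs_le.1 (hδ x)
        have h2 := le_abs_self ν
        rw [hKdef]
        linarith [h1.1, h1.2]
      rw [eIntegral_shift P _ hK0 (lb _ hSb) (Hneg _ hSm ν),
        eIntegral_shift (SdualSigma μ T P) _ hK0 (lb _ hγC0) (Hneg _ hγm ν)]
      refine EReal.sub_le_sub ?_ le_rfl
      rw [EReal.coe_ennreal_le_coe_ennreal_iff]
      exact jensen_key μ hT P f hf1 hγm hγC0 ν K le_rfl
    refine le_iSup₂_of_le (SSigma μ T γ)
      ⟨hSγΓ, fun σ => funext fun x => hSinv σ x⟩ ?_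
    rw [hEQ]
    exact EReal.sub_le_sub le_rfl hΛ
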